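/- The Böhm sequence of fixed point combinators contains no duplicates: for all natural numbers n ≠ m, Yₙ ≠β Yₘ, where Y₀ = λf.(λx.f(xx))(λx.f(xx)) is Curry's fpc and, for n ≥ 1, Yₙ = (ηη)δ⋯δ is ηη applied to n−1 copies of δ (association to the left). -/

import Mathlib

/-- Untyped λ-terms in de Bruijn notation (the variables are `ℕ`). -/
inductive Lam : Type
  | var : ℕ → Lam
  | app : Lam → Lam → Lam
  | abs : Lam → Lam
  deriving DecidableEq

namespace Lam

/-- Shift the free de Bruijn indices `≥ d` up by one. -/
def lift (d : ℕ) : Lam → Lam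
  | var n => if n < d then var n else var (n + 1)
  | app s t => app (lift d s) (lift d t)
  | abs t => abs (lift (d + 1) t)

/-- Capture-avoiding substitution `t[k := u]`. -/
def subst : Lam → ℕ → Lam → Lam
  | var n, k, u => if n < k then var n else if n = k then u else var (n - 1)
  | app s t, k, u => app (subst s k u) (subst t k u)
  | abs t, k, u => abs (subst t (k + 1) (lift 0 u))

/-- One-step β-reduction `→β`: the compatible closure of the β-rule. -/
inductive Beta : Lam → Lam → Prop
  | beta (t u : Lam) : Beta (Lam.app (Lam.abs t) u) (subst t 0 u)
  | appL {s s' : Lam} (t : Lam) : Beta s s' → Beta (Lam.app s t) (Lam.app s' t)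
  | appR (s : Lam) {t t' : Lam} : Beta t t' → Beta (Lam.app s t) (Lam.app s t')
  | abs {t t' : Lam} : Beta t t' → Beta (Lam.abs t) (Lam.abs t')

/-- `↠β`: the reflexive–transitive closure of `→β`. -/
def BetaStar : Lam → Lam → Prop := Relation.ReflTransGen Beta

/-- `→β^k`: the `k`-fold composition of `→β`. -/
def BetaN : ℕ → Lam → Lam → Prop
  | 0, s, t => s = t
  | k + 1, s, t => ∃ u, Beta s u ∧ BetaN k u t

/-- `=β`, β-convertibility: the equivalence closure of `→β`. -/
inductive Conv : Lam → Lam → Prop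
  | rel {s t : Lam} : Beta s t → Conv s t
  | refl (s : Lam) : Conv s s
  | symm {s t : Lam} : Conv s t → Conv t s
  | trans {s t u : Lam} : Conv s t → Conv t u → Conv s u

/-- The free variables of a term (as de Bruijn indices). -/
def FV : Lam → Finset ℕ
  | var n => {n}
  | app s t => FV s ∪ FV t
  | abs t => ((FV t).erase 0).image (· - 1)

/-- `Y` is a fixed point combinator (fpc): `Y x =β x (Y x)` for a variable `x` not free in `Y`. -/
def IsFPC (Y : Lam) : Prop :=
  ∀ x : ℕ, x ∉ FV Y → Conv (app Y (var x)) (app (var x) (app Y (var x)))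

/-- `I = λx.x` -/
def combI : Lam := abs (var 0)

/-- `S = λxyz.xz(yz)` -/
def combS : Lam := abs (abs (abs (app (app (var 2) (var 0)) (app (var 1) (var 0)))))

/-- `B = λxyz.x(yz)` -/
def combB : Lam := abs (abs (abs (app (var 2) (app (var 1) (var 0)))))

/-- `δ = λab.b(ab)` -/
def delta : Lam := abs (abs (app (var 0) (app (var 1) (var 0))))

/-- `η = λxf.f(xxf)` -/
def etaC : Lam := abs (abs (app (var 0) (app (app (var 1) (var 1)) (var 0))))

/-- Curry's fpc `Y₀ = λf.(λx.f(xx))(λx.f(xx))` -/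
def curryY : Lam :=
  abs (app (abs (app (var 1) (app (var 0) (var 0))))
    (abs (app (var 1) (app (var 0) (var 0)))))

/-- `A B ⋯ B`: `A` applied to `n` copies of `B`, associating to the left. -/
def appN (A B : Lam) : ℕ → Lam
  | 0 => A
  | n + 1 => app (appN A B n) B

/-- `M N₁ ⋯ Nₘ`: `M` applied to the terms in `L`, associating to the left. -/
def appList (M : Lam) (L : List Lam) : Lam := L.foldl app M

/-- The Böhm sequence: `Y 0` is Curry's fpc, and `Y n = (ηη)δ⋯δ` (`n-1` copies of `δ`). -/
def boehmY : ℕ → Lam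
  | 0 => curryY
  | n + 1 => appN (app etaC etaC) delta n

/-!
A conversion `Yₙ =β Yₘ` would, by Church–Rosser (via Tait–Martin-Löf parallel reduction),
give a common reduct of `Yₙ` and `Yₘ`; so it suffices to exhibit classes `Rₙ ∋ Yₙ` of terms
that are closed under `→β` and pairwise disjoint. The reducts of `Y₀` are `λf. fʲ(ω_f ω_f)`.
Those of `Yₙ₊₁` are generated from `ηη` by `t ↦ tδ` (which raises the index), `t ↦ δt` and
`t ↦ λf. fʲ(tf)`: indeed `ηη → λf. f(ηηf)`, `δt → λf. f(tf)` and `(λf. fʲ(tf))δ → δʲ(tδ)`.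
All of these terms are closed and `δ`, `η`, `ω_f` are normal, which keeps the classes closed
under `→β`; and the index can be read off the shape of the term.
-/

theorem lift_lift (t : Lam) {i k : ℕ} (h : i ≤ k) :
    lift i (lift k t) = lift (k + 1) (lift i t) := by
  induction t generalizing i k with
  | var n => simp only [lift]; split_ifs <;> grind [lift]
  | app s t ihs iht => simp only [lift, ihs h, iht h]
  | abs t ih => simp only [lift, ih (Nat.succ_le_succ h)]

theorem subst_lift (t : Lam) (k : ℕ) (u : Lam) : subst (lift k t) k u = t := by
  induction t generalizing k u with
  | var n => simp only [lift]; split_ifs <;> grind [subst]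
  | app s t ihs iht => simp only [lift, subst, ihs, iht]
  | abs t ih => simp only [lift, subst, ih]

theorem lift_subst_of_le (t : Lam) {i j : ℕ} (u : Lam) (h : j ≤ i) :
    lift i (subst t j u) = subst (lift (i + 1) t) j (lift i u) := by
  induction t generalizing i j u with
  | var n => simp only [subst, lift]; split_ifs <;> grind [subst, lift]
  | app s t ihs iht => simp only [lift, subst, ihs _ h, iht _ h]
  | abs t ih => simp only [lift, subst, ih _ (Nat.succ_le_succ h), lift_lift u (Nat.zero_le i)]

theorem lift_subst_of_ge (t : Lam) {i j : ℕ} (u : Lam) (h : i ≤ j) :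
    lift i (subst t j u) = subst (lift i t) (j + 1) (lift i u) := by
  induction t generalizing i j u with
  | var n => simp only [subst, lift]; split_ifs <;> grind [subst, lift]
  | app s t ihs iht => simp only [lift, subst, ihs _ h, iht _ h]
  | abs t ih => simp only [lift, subst, ih _ (Nat.succ_le_succ h), lift_lift u (Nat.zero_le i)]

theorem subst_subst (t : Lam) {i j : ℕ} (u v : Lam) (h : i ≤ j) :
    subst (subst t i u) j v = subst (subst t (j + 1) (lift i v)) i (subst u j v) := by
  induction t generalizing i j u v with
  | var n => simp only [subst]; split_ifs <;> grind [subst, subst_lift]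
  | app s t ihs iht => simp only [subst, ihs _ _ h, iht _ _ h]
  | abs t ih =>
    simp only [subst, ih _ _ (Nat.succ_le_succ h), lift_lift v (Nat.zero_le i),
      lift_subst_of_ge u v (Nat.zero_le j)]

theorem BetaStar.appL {s s' : Lam} (t : Lam) (h : BetaStar s s') : BetaStar (app s t) (app s' t) :=
  h.lift (app · t) fun _ _ ↦ Beta.appL t

theorem BetaStar.appR (s : Lam) {t t' : Lam} (h : BetaStar t t') : BetaStar (app s t) (app s t') :=
  h.lift (app s) fun _ _ ↦ Beta.appR s

theorem BetaStar.abs {t t' : Lam} (h : BetaStar t t') : BetaStar (abs t) (abs t') :=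
  h.lift Lam.abs fun _ _ ↦ Beta.abs

inductive Par : Lam → Lam → Prop
  | var (n : ℕ) : Par (var n) (var n)
  | app {s s' t t' : Lam} : Par s s' → Par t t' → Par (app s t) (app s' t')
  | abs {t t' : Lam} : Par t t' → Par (abs t) (abs t')
  | beta {t t' u u' : Lam} : Par t t' → Par u u' → Par (app (abs t) u) (subst t' 0 u')

namespace Par

theorem refl : ∀ t : Lam, Par t t
  | .var n => .var n
  | .app s t => .app (refl s) (refl t)
  | .abs t => .abs (refl t)

theorem of_beta {s t : Lam} (h : Beta s t) : Par s t := by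
  induction h with
  | beta t u => exact .beta (refl t) (refl u)
  | appL t _ ih => exact .app ih (refl t)
  | appR s _ ih => exact .app (refl s) ih
  | abs _ ih => exact .abs ih

theorem betaStar {s t : Lam} (h : Par s t) : BetaStar s t := by
  induction h with
  | var n => exact .refl
  | app _ _ ihs iht => exact (ihs.appL _).trans (iht.appR _)
  | abs _ ih => exact ih.abs
  | @beta t t' u u' _ _ iht ihu => exact ((iht.abs.appL _).trans (ihu.appR _)).tail (.beta t' u')

theorem lift {t t' : Lam} (h : Par t t') (d : ℕ) : Par (t.lift d) (t'.lift d) := by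
  induction h generalizing d with
  | var n => exact refl _
  | app _ _ ihs iht => exact .app (ihs d) (iht d)
  | abs _ ih => exact .abs (ih (d + 1))
  | @beta a a' u u' _ _ iha ihu =>
    rw [Lam.lift, Lam.lift, lift_subst_of_le a' u' (Nat.zero_le d)]
    exact .beta (iha (d + 1)) (ihu d)

theorem subst {t t' u u' : Lam} (h : Par t t') (k : ℕ) (hu : Par u u') :
    Par (t.subst k u) (t'.subst k u') := by
  induction h generalizing k u u' with
  | var n => simp only [Lam.subst]; split_ifs <;> first | exact hu | exact refl _
  | app _ _ ihs iht => exact .app (ihs k hu) (iht k hu)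
  | abs _ ih => exact .abs (ih (k + 1) (hu.lift 0))
  | @beta a a' b b' _ _ iha ihb =>
    rw [Lam.subst, Lam.subst, subst_subst a' b' u' (Nat.zero_le k)]
    exact .beta (iha (k + 1) (hu.lift 0)) (ihb k hu)

theorem abs_inv {t z : Lam} (h : Par (.abs t) z) : ∃ t', z = .abs t' ∧ Par t t' := by
  cases h with
  | abs h => exact ⟨_, rfl, h⟩

theorem diamond {a b c : Lam} (hab : Par a b) (hac : Par a c) : ∃ d, Par b d ∧ Par c d := by
  induction hab generalizing c with
  | var n => cases hac; exact ⟨_, .var n, .var n⟩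
  | app hs _ ihs iht =>
    cases hac with
    | app hs₂ ht₂ =>
      obtain ⟨d₁, h₁, h₂⟩ := ihs hs₂
      obtain ⟨d₂, h₃, h₄⟩ := iht ht₂
      exact ⟨_, .app h₁ h₃, .app h₂ h₄⟩
    | beta ha₂ hu₂ =>
      obtain ⟨a₁, rfl, -⟩ := abs_inv hs
      obtain ⟨_, h₁, h₂⟩ := ihs (.abs ha₂)
      obtain ⟨a₃, rfl, h₁'⟩ := abs_inv h₁
      obtain ⟨_, ⟨⟩, h₂'⟩ := abs_inv h₂
      obtain ⟨d₂, h₃, h₄⟩ := iht hu₂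
      exact ⟨_, .beta h₁' h₃, h₂'.subst 0 h₄⟩
  | abs _ ih =>
    obtain ⟨t₂, rfl, ht₂⟩ := abs_inv hac
    obtain ⟨d, h₁, h₂⟩ := ih ht₂
    exact ⟨_, .abs h₁, .abs h₂⟩
  | beta _ _ iha ihu =>
    cases hac with
    | app hs₂ ht₂ =>
      obtain ⟨a₂, rfl, ha₂⟩ := abs_inv hs₂
      obtain ⟨a₃, h₁, h₂⟩ := iha ha₂
      obtain ⟨u₃, h₃, h₄⟩ := ihu ht₂
      exact ⟨_, h₁.subst 0 h₃, .beta h₂ h₄⟩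
    | beta ha₂ hu₂ =>
      obtain ⟨a₃, h₁, h₂⟩ := iha ha₂
      obtain ⟨u₃, h₃, h₄⟩ := ihu hu₂
      exact ⟨_, h₁.subst 0 h₃, h₂.subst 0 h₄⟩

theorem reflTransGen_eq_betaStar : Relation.ReflTransGen Par = BetaStar :=
  le_antisymm (Relation.reflTransGen_closed fun _ _ ↦ betaStar)
    (Relation.ReflTransGen.mono fun _ _ ↦ of_beta)

end Par

theorem Conv.exists_betaStar {s t : Lam} (h : Conv s t) : ∃ u, BetaStar s u ∧ BetaStar t u := by
  rw [← Par.reflTransGen_eq_betaStar]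
  have hequiv := Relation.equivalence_join_reflTransGen (r := Par) fun _ _ _ hab hac ↦
    let ⟨d, hbd, hcd⟩ := Par.diamond hab hac
    ⟨d, .single hbd, .single hcd⟩
  induction h with
  | rel h => exact ⟨_, .single (Par.of_beta h), .refl⟩
  | refl s => exact hequiv.refl s
  | symm _ ih => exact hequiv.symm ih
  | trans _ _ ih₁ ih₂ => exact hequiv.trans ih₁ ih₂

theorem lift_iterate_app (d : ℕ) (v s : Lam) (j : ℕ) :
    lift d ((app v)^[j] s) = (app (lift d v))^[j] (lift d s) :=
  (show Function.Semiconj (lift d) (app v) (app (lift d v)) from fun _ ↦ rfl).iterate_right j s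

theorem subst_iterate_app (v s : Lam) (k : ℕ) (u : Lam) (j : ℕ) :
    subst ((app v)^[j] s) k u = (app (subst v k u))^[j] (subst s k u) :=
  (show Function.Semiconj (subst · k u) (app v) (app (subst v k u)) from fun _ ↦ rfl).iterate_right
    j s

theorem eq_of_iterate_app_eq {v a₁ a₂ b₁ b₂ : Lam} (ha : a₁ ≠ v) (hb : b₁ ≠ v) {i j : ℕ}
    (h : (app v)^[i] (app a₁ a₂) = (app v)^[j] (app b₁ b₂)) : app a₁ a₂ = app b₁ b₂ := by
  induction i generalizing j with
  | zero =>
    cases j with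
    | zero => exact h
    | succ j =>
      rw [Function.iterate_zero_apply, Function.iterate_succ_apply', app.injEq] at h
      exact absurd h.1 ha
  | succ i ih =>
    cases j with
    | zero =>
      rw [Function.iterate_zero_apply, Function.iterate_succ_apply', app.injEq] at h
      exact absurd h.1.symm hb
    | succ j =>
      rw [Function.iterate_succ_apply', Function.iterate_succ_apply', app.injEq] at h
      exact ih h.2

theorem iterate_app_ne_abs (v a b s : Lam) (j : ℕ) : (app v)^[j] (app a b) ≠ abs s := by
  cases j <;> simp [Function.iterate_succ_apply']

theorem Beta.iterate_app_var_inv {m j : ℕ} {s u : Lam} (h : Beta ((app (var m))^[j] s) u) :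
    ∃ s', u = (app (var m))^[j] s' ∧ Beta s s' := by
  induction j generalizing u with
  | zero => exact ⟨u, rfl, h⟩
  | succ j ih =>
    rw [Function.iterate_succ_apply'] at h
    rcases h with _ | ⟨_, ⟨⟩⟩ | ⟨_, h⟩
    obtain ⟨s', rfl, hs⟩ := ih h
    exact ⟨s', (Function.iterate_succ_apply' ..).symm, hs⟩

def hasRedex : Lam → Bool
  | var _ => false
  | abs t => hasRedex t
  | app (abs _) _ => true
  | app s t => hasRedex s || hasRedex t

theorem Beta.hasRedex {s t : Lam} (h : Beta s t) : hasRedex s = true := by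
  induction h with
  | beta t u => rfl
  | @appL s _ _ _ ih => cases s <;> simp_all [Lam.hasRedex]
  | @appR s _ _ _ ih => cases s <;> simp_all [Lam.hasRedex]
  | abs _ ih => exact ih

theorem not_beta_of_hasRedex_eq_false {s t : Lam} (hs : hasRedex s = false) : ¬ Beta s t :=
  fun h ↦ by simp [h.hasRedex] at hs

-- `ω_f = λx.f(xx)`, where `f` is the variable bound just outside, so `curryY = λf. ω_f ω_f`.
def omegaF : Lam := abs (app (var 1) (app (var 0) (var 0)))

-- Under the binder `λf`, `(app (var 0))^[j] s` is `fʲ s`.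
inductive IsBoehmReduct : ℕ → Lam → Prop
  | curry (j : ℕ) : IsBoehmReduct 0 (abs ((app (var 0))^[j] (app omegaF omegaF)))
  | etaEta : IsBoehmReduct 1 (app etaC etaC)
  | appDelta {n : ℕ} {t : Lam} : IsBoehmReduct (n + 1) t → IsBoehmReduct (n + 2) (app t delta)
  | deltaApp {n : ℕ} {t : Lam} : IsBoehmReduct (n + 1) t → IsBoehmReduct (n + 1) (app delta t)
  | absBody {n : ℕ} {t : Lam} (j : ℕ) : IsBoehmReduct (n + 1) t →
      IsBoehmReduct (n + 1) (abs ((app (var 0))^[j] (app t (var 0))))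

namespace IsBoehmReduct

theorem lift_eq {n : ℕ} {t : Lam} (h : IsBoehmReduct n t) (d : ℕ) : lift d t = t := by
  induction h generalizing d with
  | curry j => simp [lift, lift_iterate_app, omegaF]
  | etaEta => simp [lift, etaC]
  | appDelta _ ih => simp [lift, ih, delta]
  | deltaApp _ ih => simp [lift, ih, delta]
  | absBody j _ ih => simp [lift, lift_iterate_app, ih]

theorem subst_eq {n : ℕ} {t : Lam} (h : IsBoehmReduct n t) (k : ℕ) (u : Lam) :
    subst t k u = t := by
  induction h generalizing k u with
  | curry j => simp [subst, subst_iterate_app, omegaF]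
  | etaEta => simp [subst, etaC]
  | appDelta _ ih => simp [subst, ih, delta]
  | deltaApp _ ih => simp [subst, ih, delta]
  | absBody j _ ih => simp [subst, subst_iterate_app, ih]

theorem iterate_deltaApp {n : ℕ} {t : Lam} (h : IsBoehmReduct (n + 1) t) (j : ℕ) :
    IsBoehmReduct (n + 1) ((app delta)^[j] t) := by
  induction j with
  | zero => exact h
  | succ j ih => rw [Function.iterate_succ_apply']; exact ih.deltaApp

theorem step {n : ℕ} {t t' : Lam} (h : IsBoehmReduct n t) (ht : Beta t t') :
    IsBoehmReduct n t' := by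
  induction h generalizing t' with
  | curry j =>
    rcases ht with _ | _ | _ | ht
    obtain ⟨s, rfl, hs⟩ := ht.iterate_app_var_inv
    unfold omegaF at hs
    rcases hs with _ | ⟨_, hs⟩ | ⟨_, hs⟩
    · convert curry (j + 1) using 2
      rw [Function.iterate_succ_apply]
      rfl
    all_goals exact absurd hs (not_beta_of_hasRedex_eq_false rfl)
  | etaEta =>
    unfold etaC at ht
    rcases ht with _ | ⟨_, ht⟩ | ⟨_, ht⟩
    · exact absBody 1 etaEta
    all_goals exact absurd ht (not_beta_of_hasRedex_eq_false rfl)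
  | appDelta ht₀ ih =>
    rcases ht with _ | ⟨_, ht⟩ | ⟨_, ht⟩
    · rcases ht₀ with _ | _ | _ | _ | ⟨j, ht₀⟩
      simpa [subst, subst_iterate_app, ht₀.subst_eq] using (ht₀.appDelta).iterate_deltaApp j
    · exact (ih ht).appDelta
    · exact absurd ht (not_beta_of_hasRedex_eq_false rfl)
  | deltaApp ht₀ ih =>
    rcases ht with _ | ⟨_, ht⟩ | ⟨_, ht⟩
    · simpa [subst, ht₀.lift_eq] using absBody 1 ht₀
    · exact absurd ht (not_beta_of_hasRedex_eq_false rfl)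
    · exact (ih ht).deltaApp
  | absBody j ht₀ ih =>
    rcases ht with _ | _ | _ | ht
    obtain ⟨s, rfl, hs⟩ := ht.iterate_app_var_inv
    rcases hs with _ | ⟨_, hs⟩ | ⟨_, ⟨⟩⟩
    · rcases ht₀ with _ | _ | _ | _ | ⟨i, ht₀⟩
      simpa [subst, subst_iterate_app, ht₀.subst_eq, ← Function.iterate_add_apply]
        using absBody (j + i) ht₀
    · exact (ih hs).absBody j

theorem betaStar {n : ℕ} {t t' : Lam} (h : IsBoehmReduct n t) (ht : BetaStar t t') :
    IsBoehmReduct n t' := by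
  induction ht with
  | refl => exact h
  | tail _ hs ih => exact ih.step hs

theorem ne_var {n : ℕ} {t : Lam} (h : IsBoehmReduct n t) (m : ℕ) : t ≠ var m := by
  cases h <;> nofun

theorem ne_delta {n : ℕ} {t : Lam} (h : IsBoehmReduct n t) : t ≠ delta := by
  cases h <;> simp [delta, iterate_app_ne_abs]

theorem unique {n m : ℕ} {t : Lam} (h : IsBoehmReduct n t) (h' : IsBoehmReduct m t) : n = m := by
  generalize e : t = t' at h'
  induction h generalizing m t' with
  | curry j =>
    cases h' with
    | curry => rfl
    | absBody i ht' =>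
      have := eq_of_iterate_app_eq (by simp [omegaF]) (ht'.ne_var 0) (abs.inj e)
      simp [omegaF] at this
    | _ => cases e
  | etaEta =>
    cases h' with
    | etaEta => rfl
    | _ => simp [etaC, delta] at e
  | appDelta ht ih =>
    cases h' with
    | appDelta ht' => simpa using ih _ (app.inj e).1 ht'
    | deltaApp ht' => exact absurd (app.inj e).1 ht.ne_delta
    | _ => simp [etaC, delta] at e
  | deltaApp ht ih =>
    cases h' with
    | appDelta ht' => exact absurd (app.inj e).1.symm ht'.ne_delta
    | deltaApp ht' => exact ih _ (app.inj e).2 ht'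
    | _ => simp [etaC, delta] at e
  | absBody j ht ih =>
    cases h' with
    | curry i =>
      have := eq_of_iterate_app_eq (ht.ne_var 0) (by simp [omegaF]) (abs.inj e)
      simp [omegaF] at this
    | absBody i ht' =>
      exact ih _ (app.inj (eq_of_iterate_app_eq (ht.ne_var 0) (ht'.ne_var 0) (abs.inj e))).1 ht'
    | _ => cases e

end IsBoehmReduct

theorem isBoehmReduct_boehmY : ∀ n, IsBoehmReduct n (boehmY n)
  | 0 => .curry 0
  | 1 => .etaEta
  | n + 2 => (isBoehmReduct_boehmY (n + 1)).appDelta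

/-- the Böhm sequence contains no duplicates. -/
theorem boehm_sequence_no_duplicates :
    ∀ n m : ℕ, n ≠ m → ¬ Conv (boehmY n) (boehmY m) := by
  intro n m hne hconv
  obtain ⟨u, hn, hm⟩ := hconv.exists_betaStar
  have hun := (isBoehmReduct_boehmY n).betaStar hn
  have hum := (isBoehmReduct_boehmY m).betaStar hm
  exact hne (hun.unique hum)

end Lam
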